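/- arXiv:1109.2248 — 4 statements merged into one kernel-verified Lean document; each statement's English description precedes it below -/
import Mathlib

section
/- Let S ⊂ ℝ^n be a d-set with 0<d<n. Then S is porous: there exists κ ≥ 1 such that for every cube Q(x,r) with x ∈ ℝ^n and 0<r≤1, there exists y ∈ Q(x,r) with Q(y, r/κ) ∩ S = ∅. -/
/-!
If some cube `Q(x, r)` contained no hole of size `r / (8m)`, every point of an `m × ⋯ × m` grid in
`Q(x, r/4)` would lie within `r / (8m)` of `S`. The cubes of radius `r / (16m)` around these nearby
points of `S` are disjoint and lie in a cube of radius `r` centred on `S`, so the two `d`-set bounds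
give `mⁿ c₁ (r / 16m)ᵈ ≤ c₂ rᵈ`, i.e. `c₁ mⁿ⁻ᵈ ≤ 16ᵈ c₂`. Since `d < n` this fails for large `m`,
and `κ = 8m` works.
-/

open Metric MeasureTheory Filter Function Topology
open scoped ENNReal

theorem sum_measure_inter_le_measure_inter {X ι : Type*} [MeasurableSpace X] [Fintype ι]
    (μ : Measure X) (S : Set X) {A : ι → Set X} {B : Set X} (hA : ∀ i, MeasurableSet (A i))
    (hdisj : Pairwise (Disjoint on A)) (hAB : ∀ i, A i ⊆ B) (hB : MeasurableSet B) :
    ∑ i, μ (A i ∩ S) ≤ μ (B ∩ S) := by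
  calc ∑ i, μ (A i ∩ S) = ∑ i, μ.restrict S (A i) := by
        simp only [Measure.restrict_apply (hA _)]
    _ = μ.restrict S (⋃ i, A i) := by
        rw [measure_iUnion hdisj hA, tsum_fintype]
    _ ≤ μ.restrict S B := measure_mono (Set.iUnion_subset hAB)
    _ = μ (B ∩ S) := Measure.restrict_apply hB

theorem exists_separated_grid_in_closedBall {n : ℕ} (x : Fin n → ℝ) {r : ℝ} (hr : 0 ≤ r)
    (m : ℕ) : ∃ p : (Fin n → Fin m) → Fin n → ℝ, (∀ j, p j ∈ closedBall x r) ∧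
      Pairwise fun j k => 2 * r / m ≤ dist (p j) (p k) := by
  refine ⟨fun j i => x i + (2 * (j i : ℝ) + 1 - m) / m * r, fun j => ?_, fun j k hjk => ?_⟩
  · rw [mem_closedBall, dist_pi_le_iff hr]
    intro i
    have hj : (j i : ℝ) + 1 ≤ m := by exact_mod_cast (j i).is_lt
    have hm : (0 : ℝ) < m := by linarith [(j i : ℕ).cast_nonneg (α := ℝ)]
    have hcoef : |(2 * (j i : ℝ) + 1 - m) / m| ≤ 1 := by
      rw [abs_div, abs_of_pos hm, div_le_one hm, abs_le]
      constructor <;> linarith [(j i : ℕ).cast_nonneg (α := ℝ)]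
    rw [Real.dist_eq, add_sub_cancel_left, abs_mul, abs_of_nonneg hr]
    exact mul_le_of_le_one_left hr hcoef
  · obtain ⟨i, hi⟩ := Function.ne_iff.mp hjk
    have hgap : (1 : ℝ) ≤ |(j i : ℝ) - (k i : ℝ)| := by
      have : (j i : ℤ) ≠ (k i : ℤ) := by exact_mod_cast Fin.val_injective.ne hi
      exact_mod_cast Int.one_le_abs (sub_ne_zero.mpr this)
    refine le_trans ?_ (dist_le_pi_dist _ _ i)
    have hsub : x i + (2 * (j i : ℝ) + 1 - m) / m * r - (x i + (2 * (k i : ℝ) + 1 - m) / m * r)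
        = ((j i : ℝ) - (k i : ℝ)) * (2 * r / m) := by ring
    rw [Real.dist_eq, hsub, abs_mul, abs_of_nonneg (a := 2 * r / m) (by positivity)]
    exact le_mul_of_one_le_left (by positivity) hgap

theorem tendsto_natCast_pow_mul_ofReal_inv_rpow {n : ℕ} {d : ℝ} (hdn : d < n) {K : ℝ}
    (hK : 0 < K) :
    Tendsto (fun m : ℕ => (m : ℝ≥0∞) ^ n * ENNReal.ofReal (K * m)⁻¹ ^ d) atTop (𝓝 ∞) := by
  have hreal : Tendsto (fun m : ℕ => (K ^ d)⁻¹ * (m : ℝ) ^ ((n : ℝ) - d)) atTop atTop :=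
    ((tendsto_rpow_atTop (sub_pos.2 hdn)).comp tendsto_natCast_atTop_atTop).const_mul_atTop
      (by positivity)
  refine (ENNReal.tendsto_ofReal_atTop.comp hreal).congr' ?_
  filter_upwards [eventually_gt_atTop 0] with m hm
  have hm' : (0 : ℝ) < m := by exact_mod_cast hm
  have hreal_eq : (K ^ d)⁻¹ * (m : ℝ) ^ ((n : ℝ) - d) = (m : ℝ) ^ n * ((K * m)⁻¹) ^ d := by
    rw [Real.inv_rpow (by positivity), Real.mul_rpow hK.le hm'.le, Real.rpow_sub hm',
      Real.rpow_natCast]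
    field_simp
  rw [comp_apply, hreal_eq, ENNReal.ofReal_mul (by positivity), ENNReal.ofReal_pow hm'.le,
    ENNReal.ofReal_natCast, ENNReal.ofReal_rpow_of_pos (by positivity)]

theorem pow_mul_le_of_forall_closedBall_inter_nonempty {n : ℕ} {d : ℝ}
    (μ : Measure (Fin n → ℝ)) {S : Set (Fin n → ℝ)} {c₁ c₂ : ℝ≥0∞}
    (hlow : ∀ w ∈ S, ∀ ρ : ℝ, 0 < ρ → ρ ≤ 1 → c₁ * ENNReal.ofReal ρ ^ d ≤ μ (closedBall w ρ ∩ S))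
    (hup : ∀ w ∈ S, ∀ ρ : ℝ, 0 < ρ → ρ ≤ 1 → μ (closedBall w ρ ∩ S) ≤ c₂ * ENNReal.ofReal ρ ^ d)
    {x : Fin n → ℝ} {r : ℝ} (hr : 0 < r) (hr1 : r ≤ 1) {m : ℕ} (hm : 0 < m)
    (hS : ∀ y ∈ closedBall x r, (closedBall y (r / (8 * m)) ∩ S).Nonempty) :
    (m : ℝ≥0∞) ^ n * (c₁ * ENNReal.ofReal (r / (16 * m)) ^ d) ≤ c₂ * ENNReal.ofReal r ^ d := by
  have hm' : (1 : ℝ) ≤ m := Nat.one_le_cast.mpr hm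
  set t := r / (8 * m) with ht
  set ρ := r / (16 * m) with hρ
  have hρt : ρ = t / 2 := by rw [hρ, ht]; field_simp; ring
  have ht0 : 0 < t := by positivity
  have ht_le : t ≤ r / 8 := div_le_div_of_nonneg_left hr.le (by norm_num) (by linarith)
  obtain ⟨p, hpx, hpsep⟩ := exists_separated_grid_in_closedBall x (r := r / 4) (by positivity) m
  have hspacing : 2 * (r / 4) / m = 4 * t := by rw [ht]; field_simp; ring
  choose w hw using fun j => hS (p j) (closedBall_subset_closedBall (by linarith) (hpx j))
  obtain ⟨w₀, hw₀x, hw₀S⟩ := hS x (mem_closedBall_self hr.le)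
  have hwp : ∀ j, dist (w j) (p j) ≤ t := fun j => (hw j).1
  have hdisj : Pairwise (Disjoint on fun j => closedBall (w j) ρ) := fun j k hjk =>
    closedBall_disjoint_closedBall <| by
      linarith [hpsep hjk, dist_triangle4 (p j) (w j) (w k) (p k), dist_comm (p j) (w j), hwp j,
        hwp k]
  have hsub : ∀ j, closedBall (w j) ρ ⊆ closedBall w₀ r := fun j =>
    closedBall_subset_closedBall' <| by
      linarith [dist_triangle4 (w j) (p j) x w₀, hwp j, mem_closedBall.1 (hpx j),
        mem_closedBall'.1 hw₀x]
  calc (m : ℝ≥0∞) ^ n * (c₁ * ENNReal.ofReal ρ ^ d)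
      = ∑ _j : Fin n → Fin m, c₁ * ENNReal.ofReal ρ ^ d := by
        simp [Finset.sum_const]
    _ ≤ ∑ j, μ (closedBall (w j) ρ ∩ S) :=
        Finset.sum_le_sum fun j _ => hlow _ (hw j).2 ρ (by positivity) (by linarith)
    _ ≤ μ (closedBall w₀ r ∩ S) :=
        sum_measure_inter_le_measure_inter μ S (fun _ => measurableSet_closedBall) hdisj hsub
          measurableSet_closedBall
    _ ≤ c₂ * ENNReal.ofReal r ^ d := hup w₀ hw₀S r hr hr1

theorem exists_closedBall_inter_eq_empty {n : ℕ} {d : ℝ}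
    (μ : Measure (Fin n → ℝ)) {S : Set (Fin n → ℝ)} {c₁ c₂ : ℝ≥0∞}
    (hlow : ∀ w ∈ S, ∀ ρ : ℝ, 0 < ρ → ρ ≤ 1 → c₁ * ENNReal.ofReal ρ ^ d ≤ μ (closedBall w ρ ∩ S))
    (hup : ∀ w ∈ S, ∀ ρ : ℝ, 0 < ρ → ρ ≤ 1 → μ (closedBall w ρ ∩ S) ≤ c₂ * ENNReal.ofReal ρ ^ d)
    {m : ℕ} (hm : 0 < m) (hc : c₂ < c₁ * ((m : ℝ≥0∞) ^ n * ENNReal.ofReal (16 * m)⁻¹ ^ d))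
    {x : Fin n → ℝ} {r : ℝ} (hr : 0 < r) (hr1 : r ≤ 1) :
    ∃ y ∈ closedBall x r, closedBall y (r / (8 * m)) ∩ S = ∅ := by
  by_contra! hS
  have hrd₀ : ENNReal.ofReal r ^ d ≠ 0 := (ENNReal.rpow_pos (by simpa) ENNReal.ofReal_ne_top).ne'
  have hrd : ENNReal.ofReal r ^ d ≠ ∞ :=
    ENNReal.rpow_ne_top_of_ne_zero (by simpa) ENNReal.ofReal_ne_top
  have hsplit : ENNReal.ofReal (r / (16 * m)) ^ d
      = ENNReal.ofReal r ^ d * ENNReal.ofReal (16 * m)⁻¹ ^ d := by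
    rw [div_eq_mul_inv, ENNReal.ofReal_mul hr.le,
      ENNReal.mul_rpow_of_ne_zero (by simpa) (by simp; positivity)]
  have hpack := pow_mul_le_of_forall_closedBall_inter_nonempty μ hlow hup hr hr1 hm hS
  rw [hsplit] at hpack
  refine hc.not_ge ((ENNReal.mul_le_mul_iff_left hrd₀ hrd).1 ?_)
  calc c₁ * ((m : ℝ≥0∞) ^ n * ENNReal.ofReal (16 * m)⁻¹ ^ d) * ENNReal.ofReal r ^ d
      = (m : ℝ≥0∞) ^ n * (c₁ * (ENNReal.ofReal r ^ d * ENNReal.ofReal (16 * m)⁻¹ ^ d)) := by ring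
    _ ≤ c₂ * ENNReal.ofReal r ^ d := hpack

theorem stmt_4_general (n : ℕ) (d : ℝ) (hdn : d < n)
    (S : Set (Fin n → ℝ))
    (c₁ c₂ : ℝ≥0∞) (hc₁ : 0 < c₁) (hc₂ : c₂ ≠ ∞)
    (hreg : ∀ w ∈ S, ∀ r : ℝ, 0 < r → r ≤ 1 →
      c₁ * ENNReal.ofReal r ^ d ≤ μH[d] (closedBall w r ∩ S) ∧
        μH[d] (closedBall w r ∩ S) ≤ c₂ * ENNReal.ofReal r ^ d) :
    ∃ κ : ℝ, 1 ≤ κ ∧ ∀ (x : Fin n → ℝ) (r : ℝ), 0 < r → r ≤ 1 →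
      ∃ y ∈ closedBall x r, closedBall y (r / κ) ∩ S = ∅ := by
  have hlarge := ENNReal.Tendsto.const_mul (a := c₁)
    (tendsto_natCast_pow_mul_ofReal_inv_rpow hdn (K := 16) (by norm_num)) (.inl ENNReal.top_ne_zero)
  rw [ENNReal.mul_top hc₁.ne'] at hlarge
  obtain ⟨m, hm, hc⟩ := ((eventually_gt_atTop 0).and (hlarge.eventually_const_lt hc₂.lt_top)).exists
  refine ⟨8 * m, by linarith [Nat.one_le_cast (α := ℝ) |>.mpr hm], fun x r hr hr1 => ?_⟩
  exact exists_closedBall_inter_eq_empty μH[d] (fun w hw ρ hρ hρ1 => (hreg w hw ρ hρ hρ1).1)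
    (fun w hw ρ hρ hρ1 => (hreg w hw ρ hρ hρ1).2) hm hc hr hr1

/-- A `d`-set `S ⊆ ℝⁿ` with `0 < d < n` is porous: there is `κ ≥ 1` such that every cube
`Q(x,r)` (closed sup-norm ball) with `0 < r ≤ 1` contains a point `y` with
`Q(y, r/κ) ∩ S = ∅`. -/
theorem stmt_4 (n : ℕ) (d : ℝ) (hd0 : 0 < d) (hdn : d < n)
    (S : Set (Fin n → ℝ)) (hScl : IsClosed S)
    (c₁ c₂ : ℝ≥0∞) (hc₁ : 0 < c₁) (hc₂ : c₂ ≠ ∞)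
    (hreg : ∀ w ∈ S, ∀ r : ℝ, 0 < r → r ≤ 1 →
      c₁ * ENNReal.ofReal r ^ d ≤ μH[d] (closedBall w r ∩ S) ∧
        μH[d] (closedBall w r ∩ S) ≤ c₂ * ENNReal.ofReal r ^ d) :
    ∃ κ : ℝ, 1 ≤ κ ∧ ∀ (x : Fin n → ℝ) (r : ℝ), 0 < r → r ≤ 1 →
      ∃ y ∈ closedBall x r, closedBall y (r / κ) ∩ S = ∅ :=
  stmt_4_general n d hdn S c₁ c₂ hc₁ hc₂ hreg
end

section
/- Let S ⊂ ℝ^n be κ-porous, γ>0, and σ = 16κ(1+γ). Let C_{S,γ} be the family of dyadic cubes Q with γ^{-1} dist(x_Q,S) ≤ ℓ(Q) ≤ 1 (x_Q the center, ℓ(Q) the side length, distance in the sup-norm). Then for every Q ∈ C_{S,γ} there exists a dyadic cube r(Q) ⊂ int(Q) with ℓ(Q) ≤ σ ℓ(r(Q)) and ℓ(Q)/σ ≤ dist(x,S) ≤ σ ℓ(Q) for every x ∈ r(Q). -/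
/-!
Porosity at the centre of `Q`, at scale `ℓ(Q)/2`, gives a point `y ∈ Q` at distance at least
`ℓ(Q)/(2κ)` from `S`. Take for `r(Q)` a dyadic cube of side `ℓ(Q)/2^m`, where `8κ < 2^m ≤ 16κ`,
lying strictly inside `Q` and within `2ℓ(Q)/2^m` of `y`: its points stay at distance at least
`ℓ(Q)/(4κ)` from `S`, while `dist(x_Q, S) ≤ γ ℓ(Q)` bounds their distance to `S` by
`(γ + 1/2) ℓ(Q)`.
-/

open Metric

/-- The center of the closed dyadic cube of generation `j` indexed by `k : Fin n → ℤ`. -/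
noncomputable def dyCenter (n : ℕ) (j : ℤ) (k : Fin n → ℤ) : Fin n → ℝ :=
  fun i => ((k i : ℝ) + 1 / 2) * 2 ^ (-j)

/-- The closed dyadic cube of side length `2^(-j)` indexed by `k : Fin n → ℤ`, realized as
a closed sup-norm ball of radius `2^(-j)/2` around its center. -/
noncomputable def dyCube (n : ℕ) (j : ℤ) (k : Fin n → ℤ) : Set (Fin n → ℝ) :=
  closedBall (dyCenter n j k) (2 ^ (-j) / 2)

lemma mem_dyCube_iff {n : ℕ} {j : ℤ} {k : Fin n → ℤ} {x : Fin n → ℝ} :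
    x ∈ dyCube n j k ↔ ∀ i, (k i : ℝ) * 2 ^ (-j) ≤ x i ∧ x i ≤ (k i + 1) * 2 ^ (-j) := by
  rw [dyCube, mem_closedBall, dist_pi_le_iff (by positivity)]
  refine forall_congr' fun i => ?_
  rw [Real.dist_eq, abs_le, dyCenter]
  constructor <;> rintro ⟨h₁, h₂⟩ <;> constructor <;> linarith

lemma mem_interior_dyCube_iff {n : ℕ} {j : ℤ} {k : Fin n → ℤ} {x : Fin n → ℝ} :
    x ∈ interior (dyCube n j k) ↔
      ∀ i, (k i : ℝ) * 2 ^ (-j) < x i ∧ x i < (k i + 1) * 2 ^ (-j) := by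
  rw [dyCube, interior_closedBall _ (by positivity), mem_ball, dist_pi_lt_iff (by positivity)]
  refine forall_congr' fun i => ?_
  rw [Real.dist_eq, abs_lt, dyCenter]
  constructor <;> rintro ⟨h₁, h₂⟩ <;> constructor <;> linarith

lemma two_zpow_neg_eq_pow_mul (j : ℤ) (m : ℕ) :
    (2 : ℝ) ^ (-j) = 2 ^ m * 2 ^ (-(j + m)) := by
  rw [← zpow_natCast, ← zpow_add₀ two_ne_zero]
  ring_nf

lemma exists_int_Ioo_forall_Icc_abs_sub_le {a N : ℤ} (hN : 3 ≤ N) {L y : ℝ} (hL : 0 < L)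
    (hy : a * L ≤ y ∧ y ≤ (a + N) * L) :
    ∃ b : ℤ, a < b ∧ b + 1 < a + N ∧ ∀ x ∈ Set.Icc (b * L) ((b + 1) * L), |x - y| ≤ 2 * L := by
  set f := ⌊y / L⌋
  have hf : (f : ℝ) * L ≤ y ∧ y < (f + 1) * L := by
    rw [← le_div_iff₀ hL, ← div_lt_iff₀ hL]
    exact ⟨Int.floor_le _, Int.lt_floor_add_one _⟩
  have haf : a ≤ f := Int.le_floor.2 ((le_div_iff₀ hL).2 hy.1)
  -- `⌊y / L⌋`, pushed away from the two ends of `[a, a + N]`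
  set b := max (a + 1) (min f (a + N - 2))
  have hb_le : ((b - 1 : ℤ) : ℝ) ≤ f := by exact_mod_cast (by omega : b - 1 ≤ f)
  have hb_ge : ((f : ℤ) : ℝ) ≤ b ∨ ((b + 2 : ℤ) : ℝ) = a + N := by
    rcases (by omega : f ≤ b ∨ b + 2 = a + N) with h | h
    · exact .inl (by exact_mod_cast h)
    · exact .inr (by exact_mod_cast h)
  push_cast at hb_le hb_ge
  refine ⟨b, by omega, by omega, fun x ⟨hx₁, hx₂⟩ => abs_le.2 ⟨?_, ?_⟩⟩
  · rcases hb_ge with h | h <;> nlinarith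
  · nlinarith

lemma exists_dyCube_subset_interior_dist_le {n : ℕ} {j : ℤ} {k : Fin n → ℤ} {m : ℕ}
    (hm : (3 : ℤ) ≤ 2 ^ m) {y : Fin n → ℝ} (hy : y ∈ dyCube n j k) :
    ∃ k' : Fin n → ℤ, dyCube n (j + m) k' ⊆ interior (dyCube n j k) ∧
      ∀ x ∈ dyCube n (j + m) k', dist x y ≤ 2 * 2 ^ (-(j + m)) := by
  have hL : (0 : ℝ) < 2 ^ (-(j + m)) := by positivity
  have hyL : ∀ i, (k i * 2 ^ m : ℤ) * (2 : ℝ) ^ (-(j + m)) ≤ y i ∧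
      y i ≤ ((k i * 2 ^ m : ℤ) + (2 ^ m : ℤ)) * (2 : ℝ) ^ (-(j + m)) := by
    intro i
    have := mem_dyCube_iff.1 hy i
    rw [two_zpow_neg_eq_pow_mul j m] at this
    push_cast
    constructor <;> linarith
  choose k' hk' using fun i => exists_int_Ioo_forall_Icc_abs_sub_le hm hL (hyL i)
  refine ⟨k', fun x hx => mem_interior_dyCube_iff.2 fun i => ?_, fun x hx => ?_⟩
  · obtain ⟨hlo, hhi, -⟩ := hk' i
    have hlo' : (k i : ℝ) * 2 ^ m + 1 ≤ k' i := by
      exact_mod_cast (show k i * 2 ^ m + 1 ≤ k' i by omega)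
    have hhi' : (k' i : ℝ) + 2 ≤ k i * 2 ^ m + 2 ^ m := by
      exact_mod_cast (show k' i + 2 ≤ k i * 2 ^ m + 2 ^ m by omega)
    have hx := mem_dyCube_iff.1 hx i
    rw [two_zpow_neg_eq_pow_mul j m]
    constructor <;> nlinarith
  · refine (dist_pi_le_iff (by positivity)).2 fun i => ?_
    rw [Real.dist_eq]
    exact (hk' i).2.2 _ (mem_dyCube_iff.1 hx i)

lemma le_infDist_of_closedBall_inter_eq_empty {E : Type*} [PseudoMetricSpace E] {S : Set E}
    (hS : S.Nonempty) {y : E} {ρ : ℝ} (h : closedBall y ρ ∩ S = ∅) : ρ ≤ infDist y S :=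
  (le_infDist hS).2 fun _ hs => not_lt.1 fun hlt => h.subset ⟨mem_closedBall'.2 hlt.le, hs⟩

lemma exists_two_pow_between {x : ℝ} (hx : 1 ≤ x) :
    ∃ m : ℕ, x < 2 ^ m ∧ (2 : ℝ) ^ m ≤ 2 * x := by
  obtain ⟨m, hm₁, hm₂⟩ := exists_nat_pow_near hx one_lt_two
  exact ⟨m + 1, hm₂, by rw [pow_succ]; linarith⟩

/-- For a nonempty `κ`-porous set `S ⊆ ℝⁿ`, `γ > 0` and `σ = 16κ(1+γ)`: every dyadic cube `Q`
with `γ⁻¹ dist(x_Q,S) ≤ ℓ(Q) ≤ 1` contains a dyadic cube `r(Q) ⊆ int Q` with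
`ℓ(Q) ≤ σ ℓ(r(Q))` and `ℓ(Q)/σ ≤ dist(x,S) ≤ σ ℓ(Q)` for all `x ∈ r(Q)`. -/
theorem stmt_5 (n : ℕ) (S : Set (Fin n → ℝ)) (hSne : S.Nonempty)
    (κ : ℝ) (hκ : 1 ≤ κ)
    (hpor : ∀ (x : Fin n → ℝ) (r : ℝ), 0 < r → r ≤ 1 →
      ∃ y ∈ closedBall x r, closedBall y (r / κ) ∩ S = ∅)
    (γ : ℝ) (hγ : 0 < γ) (j : ℤ) (k : Fin n → ℤ)
    (hQ : γ⁻¹ * infDist (dyCenter n j k) S ≤ 2 ^ (-j) ∧ (2 : ℝ) ^ (-j) ≤ 1) :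
    ∃ (j' : ℤ) (k' : Fin n → ℤ),
      dyCube n j' k' ⊆ interior (dyCube n j k) ∧
      (2 : ℝ) ^ (-j) ≤ 16 * κ * (1 + γ) * 2 ^ (-j') ∧
      ∀ x ∈ dyCube n j' k',
        (2 : ℝ) ^ (-j) / (16 * κ * (1 + γ)) ≤ infDist x S ∧
        infDist x S ≤ 16 * κ * (1 + γ) * 2 ^ (-j) := by
  obtain ⟨hcS, hℓ₁⟩ := hQ
  set ℓ : ℝ := 2 ^ (-j)
  have hℓ : 0 < ℓ := by positivity
  obtain ⟨y, hyQ, hyB⟩ := hpor (dyCenter n j k) (ℓ / 2) (by positivity) (by linarith)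
  have hyS : ℓ / (2 * κ) ≤ infDist y S := by
    rw [← div_div]; exact le_infDist_of_closedBall_inter_eq_empty hSne hyB
  obtain ⟨m, hm₁, hm₂⟩ := exists_two_pow_between (by linarith : 1 ≤ 8 * κ)
  have hm : (3 : ℤ) ≤ 2 ^ m := by exact_mod_cast (by linarith : (3 : ℝ) ≤ 2 ^ m)
  obtain ⟨k', hsub, hnear⟩ := exists_dyCube_subset_interior_dist_le hm hyQ
  set L : ℝ := 2 ^ (-(j + m))
  have hℓL : ℓ = 2 ^ m * L := two_zpow_neg_eq_pow_mul j m
  have hL : 0 < L := by positivity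
  have hLℓ : 8 * κ * L ≤ ℓ := by rw [hℓL]; exact mul_le_mul_of_nonneg_right hm₁.le hL.le
  refine ⟨j + m, k', hsub, ?_, fun x hx => ⟨?_, ?_⟩⟩
  · calc ℓ = 2 ^ m * L := hℓL
      _ ≤ 16 * κ * L := by nlinarith
      _ ≤ 16 * κ * (1 + γ) * L := by nlinarith [mul_pos (mul_pos hγ hL) (by linarith : 0 < κ)]
  · calc ℓ / (16 * κ * (1 + γ)) ≤ ℓ / (4 * κ) :=
          div_le_div_of_nonneg_left hℓ.le (by positivity) (by nlinarith)
      _ ≤ ℓ / (2 * κ) - 2 * L := by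
        rw [div_sub' (by positivity), div_le_div_iff₀ (by positivity) (by positivity)]; nlinarith
      _ ≤ infDist y S - dist x y := by linarith [hnear x hx]
      _ ≤ infDist x S := by
        linarith [infDist_le_infDist_add_dist (x := y) (y := x) (s := S), dist_comm x y]
  · have hxc : dist x (dyCenter n j k) ≤ ℓ / 2 := mem_closedBall.1 (interior_subset (hsub hx))
    have hcS : infDist (dyCenter n j k) S ≤ γ * ℓ := by rwa [inv_mul_le_iff₀ hγ] at hcS
    calc infDist x S ≤ infDist (dyCenter n j k) S + dist x (dyCenter n j k) :=
          infDist_le_infDist_add_dist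
      _ ≤ 16 * κ * (1 + γ) * ℓ := by
        nlinarith [mul_le_mul_of_nonneg_right hκ (by positivity : 0 ≤ 16 * (1 + γ) * ℓ)]
end

section
/- Let S ⊂ ℝ^n be κ-porous, γ>0, σ = 16κ(1+γ), and let r_0 ∈ ℕ satisfy σ² < 2^{r_0}. For each Q in the family C_{S,γ} of dyadic cubes with γ^{-1} dist(x_Q,S) ≤ ℓ(Q) ≤ 1, let r(Q) be a dyadic cube as in the porosity selection (r(Q) ⊂ int Q, ℓ(Q) ≤ σℓ(r(Q)), and ℓ(Q)/σ ≤ dist(x,S) ≤ σℓ(Q) on r(Q)). If Q, R ∈ C_{S,γ} are distinct cubes whose side-length exponents are congruent modulo r_0, then r(Q) ∩ r(R) = ∅. -/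
open Metric

/-!
A point lying in both `r(Q₁)` and `r(Q₂)` has distance to `S` at least `2^(-j₁)/σ` and at most
`σ 2^(-j₂)`, which forces `2^(j₂ - j₁) ≤ σ²`. Since `j₁ ≡ j₂ (mod r₀)` and `σ² < 2^r₀`, this is
only possible for `j₁ = j₂`. Then `r(Qᵢ) ⊆ int Qᵢ`, and distinct dyadic cubes of the same
generation have disjoint interiors.
-/

lemma dist_dyCenter_apply (n : ℕ) (j : ℤ) (k₁ k₂ : Fin n → ℤ) (i : Fin n) :
    dist (dyCenter n j k₁ i) (dyCenter n j k₂ i) = |(k₁ i : ℝ) - k₂ i| * 2 ^ (-j) := by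
  have hsub : dyCenter n j k₁ i - dyCenter n j k₂ i = ((k₁ i : ℝ) - k₂ i) * 2 ^ (-j) := by
    simp only [dyCenter]
    ring
  rw [Real.dist_eq, hsub, abs_mul, abs_of_pos (zpow_pos two_pos (-j) : (0 : ℝ) < 2 ^ (-j))]

lemma interior_dyCube (n : ℕ) (j : ℤ) (k : Fin n → ℤ) :
    interior (dyCube n j k) = ball (dyCenter n j k) (2 ^ (-j) / 2) :=
  interior_closedBall _ (by positivity)

lemma disjoint_interior_dyCube {n : ℕ} {j : ℤ} {k₁ k₂ : Fin n → ℤ} (hk : k₁ ≠ k₂) :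
    Disjoint (interior (dyCube n j k₁)) (interior (dyCube n j k₂)) := by
  obtain ⟨i, hi⟩ := Function.ne_iff.mp hk
  rw [interior_dyCube, interior_dyCube, Set.disjoint_left]
  intro x hx₁ hx₂
  have hk_ne : (1 : ℝ) ≤ |(k₁ i : ℝ) - k₂ i| := by
    exact_mod_cast Int.one_le_abs (sub_ne_zero.mpr hi)
  have hcenters : dist (dyCenter n j k₁ i) (dyCenter n j k₂ i) < 2 ^ (-j) :=
    calc dist (dyCenter n j k₁ i) (dyCenter n j k₂ i)
        ≤ dist (x i) (dyCenter n j k₁ i) + dist (x i) (dyCenter n j k₂ i) :=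
          dist_triangle_left _ _ _
      _ ≤ dist x (dyCenter n j k₁) + dist x (dyCenter n j k₂) :=
          add_le_add (dist_le_pi_dist _ _ i) (dist_le_pi_dist _ _ i)
      _ < 2 ^ (-j) / 2 + 2 ^ (-j) / 2 := add_lt_add (mem_ball.mp hx₁) (mem_ball.mp hx₂)
      _ = 2 ^ (-j) := add_halves _
  rw [dist_dyCenter_apply, mul_lt_iff_lt_one_left (zpow_pos two_pos (-j))] at hcenters
  linarith

lemma two_zpow_sub_le_sq {σ d : ℝ} {i j : ℤ} (hσ : 0 < σ)
    (hlow : 2 ^ (-i) / σ ≤ d) (hup : d ≤ σ * 2 ^ (-j)) :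
    (2 : ℝ) ^ (j - i) ≤ σ ^ 2 := by
  have h2j : (0 : ℝ) < 2 ^ (-j) := by positivity
  have hi : (2 : ℝ) ^ (-i) ≤ σ ^ 2 * 2 ^ (-j) :=
    calc (2 : ℝ) ^ (-i) ≤ d * σ := (div_le_iff₀ hσ).mp hlow
      _ ≤ σ * 2 ^ (-j) * σ := mul_le_mul_of_nonneg_right hup hσ.le
      _ = σ ^ 2 * 2 ^ (-j) := by ring
  rwa [← div_le_iff₀ h2j, ← zpow_sub₀ two_ne_zero, neg_sub_neg] at hi

lemma le_of_emod_eq_of_le_of_le {σ d : ℝ} {r₀ : ℕ} {i j : ℤ} (hσ : 0 < σ)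
    (hr₀ : σ ^ 2 < 2 ^ r₀) (hmod : i % (r₀ : ℤ) = j % (r₀ : ℤ))
    (hlow : 2 ^ (-i) / σ ≤ d) (hup : d ≤ σ * 2 ^ (-j)) : j ≤ i := by
  by_contra! hij
  have hr₀_le : (r₀ : ℤ) ≤ j - i := Int.le_of_dvd (sub_pos.mpr hij) (Int.ModEq.dvd hmod)
  have : (2 : ℝ) ^ r₀ ≤ σ ^ 2 :=
    calc (2 : ℝ) ^ r₀ = 2 ^ (r₀ : ℤ) := (zpow_natCast 2 r₀).symm
      _ ≤ 2 ^ (j - i) := zpow_le_zpow_right₀ one_le_two hr₀_le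
      _ ≤ σ ^ 2 := two_zpow_sub_le_sq hσ hlow hup
  linarith

theorem stmt_6_general (n : ℕ) (S : Set (Fin n → ℝ))
    (κ : ℝ)
    (γ : ℝ) (r₀ : ℕ) (hr₀ : (16 * κ * (1 + γ)) ^ 2 < 2 ^ r₀)
    (j₁ j₂ : ℤ) (k₁ k₂ : Fin n → ℤ)
    (j₁' j₂' : ℤ) (k₁' k₂' : Fin n → ℤ)
    (hr₁ : dyCube n j₁' k₁' ⊆ interior (dyCube n j₁ k₁) ∧
      (2 : ℝ) ^ (-j₁) ≤ 16 * κ * (1 + γ) * 2 ^ (-j₁') ∧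
      ∀ x ∈ dyCube n j₁' k₁',
        (2 : ℝ) ^ (-j₁) / (16 * κ * (1 + γ)) ≤ infDist x S ∧
        infDist x S ≤ 16 * κ * (1 + γ) * 2 ^ (-j₁))
    (hr₂ : dyCube n j₂' k₂' ⊆ interior (dyCube n j₂ k₂) ∧
      (2 : ℝ) ^ (-j₂) ≤ 16 * κ * (1 + γ) * 2 ^ (-j₂') ∧
      ∀ x ∈ dyCube n j₂' k₂',
        (2 : ℝ) ^ (-j₂) / (16 * κ * (1 + γ)) ≤ infDist x S ∧
        infDist x S ≤ 16 * κ * (1 + γ) * 2 ^ (-j₂))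
    (hne : dyCube n j₁ k₁ ≠ dyCube n j₂ k₂)
    (hmod : j₁ % (r₀ : ℤ) = j₂ % (r₀ : ℤ)) :
    dyCube n j₁' k₁' ∩ dyCube n j₂' k₂' = ∅ := by
  have hσ : 0 < 16 * κ * (1 + γ) :=
    pos_of_mul_pos_left ((zpow_pos two_pos (-j₁)).trans_le hr₁.2.1) (zpow_pos two_pos (-j₁')).le
  refine Set.eq_empty_of_forall_notMem fun x ⟨hx₁, hx₂⟩ => ?_
  obtain ⟨hlow₁, hup₁⟩ := hr₁.2.2 x hx₁
  obtain ⟨hlow₂, hup₂⟩ := hr₂.2.2 x hx₂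
  obtain rfl : j₁ = j₂ :=
    le_antisymm (le_of_emod_eq_of_le_of_le hσ hr₀ hmod.symm hlow₂ hup₁)
      (le_of_emod_eq_of_le_of_le hσ hr₀ hmod hlow₁ hup₂)
  have hk : k₁ ≠ k₂ := by
    rintro rfl
    exact hne rfl
  exact Set.disjoint_left.mp (disjoint_interior_dyCube hk) (hr₁.1 hx₁) (hr₂.1 hx₂)

/-- Let `S` be κ-porous, `γ > 0`, `σ = 16κ(1+γ)`, and `r₀ ∈ ℕ` with `σ² < 2^(r₀)`.
If `Q₁, Q₂` are distinct dyadic cubes in `C_{S,γ}` whose side-length exponents are congruent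
mod `r₀`, and `r(Q₁), r(Q₂)` are dyadic cubes satisfying the porosity selection properties,
then `r(Q₁) ∩ r(Q₂) = ∅`. -/
theorem stmt_6 (n : ℕ) (S : Set (Fin n → ℝ)) (hSne : S.Nonempty)
    (κ : ℝ) (hκ : 1 ≤ κ)
    (hpor : ∀ (x : Fin n → ℝ) (r : ℝ), 0 < r → r ≤ 1 →
      ∃ y ∈ closedBall x r, closedBall y (r / κ) ∩ S = ∅)
    (γ : ℝ) (hγ : 0 < γ) (r₀ : ℕ) (hr₀ : (16 * κ * (1 + γ)) ^ 2 < 2 ^ r₀)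
    (j₁ j₂ : ℤ) (k₁ k₂ : Fin n → ℤ)
    (hQ₁ : γ⁻¹ * infDist (dyCenter n j₁ k₁) S ≤ 2 ^ (-j₁) ∧ (2 : ℝ) ^ (-j₁) ≤ 1)
    (hQ₂ : γ⁻¹ * infDist (dyCenter n j₂ k₂) S ≤ 2 ^ (-j₂) ∧ (2 : ℝ) ^ (-j₂) ≤ 1)
    (j₁' j₂' : ℤ) (k₁' k₂' : Fin n → ℤ)
    (hr₁ : dyCube n j₁' k₁' ⊆ interior (dyCube n j₁ k₁) ∧
      (2 : ℝ) ^ (-j₁) ≤ 16 * κ * (1 + γ) * 2 ^ (-j₁') ∧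
      ∀ x ∈ dyCube n j₁' k₁',
        (2 : ℝ) ^ (-j₁) / (16 * κ * (1 + γ)) ≤ infDist x S ∧
        infDist x S ≤ 16 * κ * (1 + γ) * 2 ^ (-j₁))
    (hr₂ : dyCube n j₂' k₂' ⊆ interior (dyCube n j₂ k₂) ∧
      (2 : ℝ) ^ (-j₂) ≤ 16 * κ * (1 + γ) * 2 ^ (-j₂') ∧
      ∀ x ∈ dyCube n j₂' k₂',
        (2 : ℝ) ^ (-j₂) / (16 * κ * (1 + γ)) ≤ infDist x S ∧
        infDist x S ≤ 16 * κ * (1 + γ) * 2 ^ (-j₂))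
    (hne : dyCube n j₁ k₁ ≠ dyCube n j₂ k₂)
    (hmod : j₁ % (r₀ : ℤ) = j₂ % (r₀ : ℤ)) :
    dyCube n j₁' k₁' ∩ dyCube n j₂' k₂' = ∅ :=
  stmt_6_general n S κ γ r₀ hr₀ j₁ j₂ k₁ k₂ j₁' j₂' k₁' k₂' hr₁ hr₂ hne hmod
end

section
/- Let S be a d-set in ℝ^n, n−1<d<n, k ∈ ℕ, 1 ≤ u ≤ p < ∞, and let f ∈ L^1_loc(ℝ^n). Then for every i ∈ ℕ: ‖E_k(f,Q(·,2^{-i}))_{L^u(ℝ^n)}‖_{L^p(S,H^d)} ≤ c 2^{i(n−d)/p} ‖E_k(f,Q(·,2^{-i+2}))_{L^u(ℝ^n)}‖_{L^p(ℝ^n)}, where c depends on n, u, p, and S. -/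
/-!
If `dist x y ≤ r / 2`, the cube `Q(x, r)` lies in `Q(y, 4r)`, whose volume is `4ⁿ` times larger,
so `E_k(f, Q(x, r)) ≤ 4^{n/u} E_k(f, Q(y, 4r))`. Averaging this over `y ∈ Q(x, r/2)` (volume `rⁿ`),
integrating over `x ∈ S` against `H^d` and exchanging the integrals, every `y` gets the weight
`H^d(Q(y, r/2) ∩ S)`, which is at most `c₂ r^d` because `Q(y, r/2) ∩ S` lies in a cube of radius
`r` centred in `S`. This produces the factor `r^{d-n} = 2^{i(n-d)}`.
-/

open Metric MeasureTheory
open scoped ENNReal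

/-- Functions `ℝⁿ → ℝ` given by polynomials of degree at most `k - 1`
(for `k = 0` this is the zero space `P_{-1} = {0}`). -/
def degLT (n k : ℕ) : Set ((Fin n → ℝ) → ℝ) :=
  {P | ∃ q : MvPolynomial (Fin n) ℝ, (q = 0 ∨ q.totalDegree + 1 ≤ k) ∧
    ∀ x, P x = MvPolynomial.eval x q}

/-- The normalized local best approximation in `ℝⁿ`:
`E_k(f,Q(x,r))_{L^u(ℝⁿ)} = inf_{deg P ≤ k-1} (|Q|⁻¹ ∫_Q |f - P|^u dx)^{1/u}`, expressed as
the `L^u`-norm with respect to the normalized Lebesgue measure on the cube. -/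
noncomputable def locApproxRn (n k : ℕ) (u : ℝ) (f : (Fin n → ℝ) → ℝ)
    (x : Fin n → ℝ) (r : ℝ) : ℝ≥0∞ :=
  ⨅ P ∈ degLT n k, eLpNorm (fun y => f y - P y) (ENNReal.ofReal u)
    ((volume (closedBall x r))⁻¹ • volume.restrict (closedBall x r))

section Averaging

variable {α : Type*} [MeasurableSpace α] {μ ν : Measure α}

theorem setLIntegral_eq_of_le_of_lintegral_eq {g₀ g : α → ℝ≥0∞} (hle : g₀ ≤ g)
    (heq : ∫⁻ x, g₀ x ∂μ = ∫⁻ x, g x ∂μ) (hfin : ∫⁻ x, g x ∂μ ≠ ∞) {s : Set α}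
    (hs : MeasurableSet s) : ∫⁻ x in s, g₀ x ∂μ = ∫⁻ x in s, g x ∂μ := by
  refine le_antisymm (lintegral_mono fun x => hle x) ?_
  have hcompl : ∫⁻ x in sᶜ, g x ∂μ ≠ ∞ :=
    (ENNReal.add_ne_top.1 (lintegral_add_compl g hs ▸ hfin)).2
  refine ENNReal.le_of_add_le_add_right hcompl ?_
  calc ∫⁻ x in s, g x ∂μ + ∫⁻ x in sᶜ, g x ∂μ
      = ∫⁻ x in s, g₀ x ∂μ + ∫⁻ x in sᶜ, g₀ x ∂μ := by
        rw [lintegral_add_compl g hs, lintegral_add_compl g₀ hs, heq]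
    _ ≤ ∫⁻ x in s, g₀ x ∂μ + ∫⁻ x in sᶜ, g x ∂μ := by
        gcongr
        exact hle _

variable [PseudoMetricSpace α] [OpensMeasurableSpace α] [SecondCountableTopology α]
  [SFinite μ] [SFinite ν]

theorem mul_lintegral_le_of_le_setLIntegral_closedBall_of_measurable {F g : α → ℝ≥0∞}
    (hg : Measurable g) {ρ : ℝ} {V M : ℝ≥0∞} (hF : ∀ x, V * F x ≤ ∫⁻ y in closedBall x ρ, g y ∂μ)
    (hν : ∀ y, ν (closedBall y ρ) ≤ M) :
    V * ∫⁻ x, F x ∂ν ≤ M * ∫⁻ y, g y ∂μ := by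
  have hG : Measurable (Function.uncurry fun x y => (closedBall x ρ).indicator g y) := by
    refine (hg.comp measurable_snd).indicator (measurableSet_le ?_ measurable_const)
    exact measurable_snd.dist measurable_fst
  calc V * ∫⁻ x, F x ∂ν ≤ ∫⁻ x, V * F x ∂ν := lintegral_const_mul_le _ _
    _ ≤ ∫⁻ x, ∫⁻ y, (closedBall x ρ).indicator g y ∂μ ∂ν := by
        refine lintegral_mono fun x => ?_
        rw [lintegral_indicator measurableSet_closedBall]
        exact hF x
    _ = ∫⁻ y, ∫⁻ x, (closedBall y ρ).indicator (fun _ => g y) x ∂ν ∂μ := by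
        rw [lintegral_lintegral_swap hG.aemeasurable]
        simp only [Set.indicator, mem_closedBall, dist_comm]
    _ = ∫⁻ y, g y * ν (closedBall y ρ) ∂μ := by
        refine lintegral_congr fun y => ?_
        rw [lintegral_indicator measurableSet_closedBall, setLIntegral_const]
    _ ≤ ∫⁻ y, g y * M ∂μ := lintegral_mono fun y => by gcongr; exact hν y
    _ = M * ∫⁻ y, g y ∂μ := by rw [lintegral_mul_const _ hg, mul_comm]

theorem mul_lintegral_le_of_le_setLIntegral_closedBall {F g : α → ℝ≥0∞} {ρ : ℝ} (hρ : 0 < ρ)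
    {V M : ℝ≥0∞} (hF : ∀ x, V * F x ≤ ∫⁻ y in closedBall x ρ, g y ∂μ)
    (hν : ∀ y, ν (closedBall y ρ) ≤ M) :
    V * ∫⁻ x, F x ∂ν ≤ M * ∫⁻ y, g y ∂μ := by
  -- Tonelli needs a measurable `g`; a measurable minorant with the same finite integral has
  -- the same integral over every ball.
  obtain ⟨g₀, hg₀, hle, heq⟩ := exists_measurable_le_lintegral_eq μ g
  rcases ne_or_eq (∫⁻ y, g y ∂μ) ∞ with hfin | hinf
  · rw [heq]
    refine mul_lintegral_le_of_le_setLIntegral_closedBall_of_measurable hg₀ (fun x => ?_) hν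
    rw [setLIntegral_eq_of_le_of_lintegral_eq hle heq.symm hfin measurableSet_closedBall]
    exact hF x
  rcases eq_or_ne M 0 with rfl | hM
  · have hν0 : ν = 0 := by
      refine Measure.measure_univ_eq_zero.1 (measure_null_of_locally_null _ fun y _ => ?_)
      exact ⟨closedBall y ρ, mem_nhdsWithin_of_mem_nhds (closedBall_mem_nhds y hρ),
        nonpos_iff_eq_zero.1 (hν y)⟩
    simp [hν0]
  · rw [hinf, ENNReal.mul_top hM]
    exact le_top

end Averaging

theorem eLpNorm_average_restrict_le_of_subset {α ε : Type*} [MeasurableSpace α]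
    [TopologicalSpace ε] [ContinuousENorm ε] {μ : Measure α} {s t : Set α} (hst : s ⊆ t)
    (ht₀ : μ t ≠ 0) (ht : μ t ≠ ∞) {p : ℝ≥0∞} (hp : p ≠ ∞) (f : α → ε) :
    eLpNorm f p ((μ s)⁻¹ • μ.restrict s) ≤
      (μ t / μ s) ^ (1 / p).toReal * eLpNorm f p ((μ t)⁻¹ • μ.restrict t) := by
  rw [← smul_eq_mul, ← eLpNorm_smul_measure_of_ne_top hp, smul_smul,
    ENNReal.div_eq_inv_mul, mul_assoc, ENNReal.mul_inv_cancel ht₀ ht, mul_one]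
  exact eLpNorm_mono_measure f (by gcongr)

theorem locApproxRn_le_of_dist_add_le {n k : ℕ} {u : ℝ} (hu : 0 ≤ u) (f : (Fin n → ℝ) → ℝ)
    {x y : Fin n → ℝ} {r R : ℝ} (hr : 0 < r) (hxy : dist x y + r ≤ R) :
    locApproxRn n k u f x r ≤
      ENNReal.ofReal ((R / r) ^ n) ^ (1 / u) * locApproxRn n k u f y R := by
  have hR : 0 < R := by linarith [dist_nonneg (x := x) (y := y)]
  have hratio :
      volume (closedBall y R) / volume (closedBall x r) = ENNReal.ofReal ((R / r) ^ n) := by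
    rw [Real.volume_pi_closedBall _ hR.le, Real.volume_pi_closedBall _ hr.le, Fintype.card_fin,
      ← ENNReal.ofReal_div_of_pos (by positivity), ← div_pow, mul_div_mul_left _ _ two_ne_zero]
  have hvol₀ : volume (closedBall y R) ≠ 0 := (measure_closedBall_pos _ _ hR).ne'
  have hK₀ : ENNReal.ofReal ((R / r) ^ n) ^ (1 / u) ≠ 0 :=
    (ENNReal.rpow_pos (ENNReal.ofReal_pos.2 (by positivity)) ENNReal.ofReal_ne_top).ne'
  have hK : ENNReal.ofReal ((R / r) ^ n) ^ (1 / u) ≠ ∞ :=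
    ENNReal.rpow_ne_top_of_nonneg (by positivity) ENNReal.ofReal_ne_top
  unfold locApproxRn
  simp only [ENNReal.mul_iInf_of_ne hK₀ hK]
  refine iInf₂_mono fun P _ => ?_
  have := eLpNorm_average_restrict_le_of_subset
    (closedBall_subset_closedBall' (by rwa [add_comm] at hxy)) hvol₀
    measure_closedBall_lt_top.ne (ENNReal.ofReal_ne_top (r := u)) (fun z => f z - P z)
  rwa [hratio, ENNReal.toReal_div, ENNReal.toReal_one, ENNReal.toReal_ofReal hu] at this

section AhlforsRegular

variable {α : Type*} [PseudoMetricSpace α] [MeasurableSpace α] {μ : Measure α} {S : Set α}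
  {ρ : ℝ} {M : ℝ≥0∞}

theorem measure_closedBall_half_inter_le (h : ∀ w ∈ S, μ (closedBall w ρ ∩ S) ≤ M) (y : α) :
    μ (closedBall y (ρ / 2) ∩ S) ≤ M := by
  rcases (closedBall y (ρ / 2) ∩ S).eq_empty_or_nonempty with he | ⟨w, hwy, hwS⟩
  · simp [he]
  · refine (measure_mono (Set.inter_subset_inter_left S ?_)).trans (h w hwS)
    exact closedBall_subset_closedBall' (by linarith [mem_closedBall.1 hwy, dist_comm y w])

theorem isLocallyFiniteMeasure_restrict_of_measure_closedBall_inter_le [OpensMeasurableSpace α]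
    (hρ : 0 < ρ) (hM : M ≠ ∞) (h : ∀ w ∈ S, μ (closedBall w ρ ∩ S) ≤ M) :
    IsLocallyFiniteMeasure (μ.restrict S) :=
  ⟨fun y => ⟨closedBall y (ρ / 2), closedBall_mem_nhds y (half_pos hρ), by
    rw [Measure.restrict_apply measurableSet_closedBall]
    exact (measure_closedBall_half_inter_le h y).trans_lt hM.lt_top⟩⟩

end AhlforsRegular

theorem lintegral_locApproxRn_rpow_le {n k : ℕ} {u p : ℝ} (hu : 0 ≤ u) (hp : 0 < p)
    (f : (Fin n → ℝ) → ℝ) {ν : Measure (Fin n → ℝ)} [SFinite ν] {r : ℝ} (hr : 0 < r)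
    {M : ℝ≥0∞} (hν : ∀ y, ν (closedBall y (r / 2)) ≤ M) :
    ENNReal.ofReal (r ^ n) * ∫⁻ x, locApproxRn n k u f x r ^ p ∂ν ≤
      M * (ENNReal.ofReal (4 ^ n) ^ (p / u) * ∫⁻ y, locApproxRn n k u f y (4 * r) ^ p) := by
  have hK : ∀ y, (ENNReal.ofReal (4 ^ n) ^ (1 / u) * locApproxRn n k u f y (4 * r)) ^ p =
      ENNReal.ofReal (4 ^ n) ^ (p / u) * locApproxRn n k u f y (4 * r) ^ p := fun y => by
    rw [ENNReal.mul_rpow_of_nonneg _ _ hp.le, ← ENNReal.rpow_mul, one_div_mul_eq_div]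
  rw [← lintegral_const_mul' _ _ (ENNReal.rpow_ne_top_of_nonneg (by positivity)
    ENNReal.ofReal_ne_top)]
  simp_rw [← hK]
  refine mul_lintegral_le_of_le_setLIntegral_closedBall (half_pos hr) (fun x => ?_) hν
  have hvol : volume (closedBall x (r / 2)) = ENNReal.ofReal (r ^ n) := by
    rw [Real.volume_pi_closedBall _ (by positivity), Fintype.card_fin,
      mul_div_cancel₀ _ two_ne_zero]
  rw [← hvol, mul_comm, ← setLIntegral_const]
  refine setLIntegral_mono' measurableSet_closedBall fun y hy => ?_
  have hxy : dist x y + r ≤ 4 * r := by linarith [mem_closedBall.1 hy, dist_comm x y]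
  have := locApproxRn_le_of_dist_add_le hu f (k := k) hr hxy
  rw [mul_div_cancel_right₀ _ hr.ne'] at this
  gcongr

theorem ENNReal.rpow_one_div_le_of_mul_le {V M A B : ℝ≥0∞} {p : ℝ} (hp : 0 < p) (hV₀ : V ≠ 0)
    (hV : V ≠ ∞) (h : V * A ≤ M * B) : A ^ (1 / p) ≤ (M / V) ^ (1 / p) * B ^ (1 / p) := by
  rw [← ENNReal.mul_rpow_of_nonneg _ _ (by positivity)]
  gcongr
  rwa [← ENNReal.mul_div_right_comm, ENNReal.le_div_iff_mul_le (Or.inl hV₀) (Or.inl hV), mul_comm]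

theorem ENNReal.ofReal_two_zpow_neg_rpow_div_rpow (i n : ℕ) (d p : ℝ) :
    (ENNReal.ofReal (2 ^ (-(i : ℤ))) ^ d / ENNReal.ofReal ((2 ^ (-(i : ℤ))) ^ n)) ^ (1 / p) =
      ENNReal.ofReal (2 ^ ((i : ℝ) * (n - d) / p)) := by
  have h2 : (0 : ℝ) < 2 ^ (-(i : ℤ)) := by positivity
  rw [ENNReal.ofReal_rpow_of_pos h2, ← ENNReal.ofReal_div_of_pos (by positivity),
    ENNReal.ofReal_rpow_of_pos (by positivity), ← Real.rpow_natCast, ← Real.rpow_sub h2,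
    ← Real.rpow_mul h2.le, ← Real.rpow_intCast, ← Real.rpow_mul zero_le_two]
  congr 2
  push_cast
  ring

theorem stmt_16_general (n : ℕ) (d : ℝ)
    (S : Set (Fin n → ℝ))
    (c₁ c₂ : ℝ≥0∞) (hc₂ : c₂ ≠ ∞)
    (hreg : ∀ w ∈ S, ∀ ρ : ℝ, 0 < ρ → ρ ≤ 1 →
      c₁ * ENNReal.ofReal ρ ^ d ≤ μH[d] (closedBall w ρ ∩ S) ∧
        μH[d] (closedBall w ρ ∩ S) ≤ c₂ * ENNReal.ofReal ρ ^ d)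
    (k : ℕ) (u p : ℝ) (hu : 1 ≤ u) (hup : u ≤ p) :
    ∃ c : ℝ≥0∞, c ≠ ∞ ∧ ∀ f : (Fin n → ℝ) → ℝ, LocallyIntegrable f volume →
      ∀ i : ℕ,
        (∫⁻ x in S, (locApproxRn n k u f x ((2 : ℝ) ^ (-(i : ℤ)))) ^ p ∂μH[d]) ^ (1 / p)
          ≤ c * ENNReal.ofReal ((2 : ℝ) ^ ((i : ℝ) * ((n : ℝ) - d) / p)) *
            (∫⁻ x, (locApproxRn n k u f x ((2 : ℝ) ^ (-(i : ℤ) + 2))) ^ p ∂volume) ^ (1 / p) := by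
  have hp : 0 < p := (zero_lt_one.trans_le hu).trans_le hup
  have hupper (ρ : ℝ) (hρ : 0 < ρ) (hρ₁ : ρ ≤ 1) (w : Fin n → ℝ) (hw : w ∈ S) :=
    (hreg w hw ρ hρ hρ₁).2
  have : IsLocallyFiniteMeasure (μH[d].restrict S) :=
    isLocallyFiniteMeasure_restrict_of_measure_closedBall_inter_le one_pos (M := c₂)
      hc₂ fun w hw => by simpa using hupper 1 one_pos le_rfl w hw
  refine ⟨ENNReal.ofReal (4 ^ n) ^ (1 / u) * c₂ ^ (1 / p), ?_, fun f _ i => ?_⟩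
  · exact ENNReal.mul_ne_top
      (ENNReal.rpow_ne_top_of_nonneg (by positivity) ENNReal.ofReal_ne_top)
      (ENNReal.rpow_ne_top_of_nonneg (by positivity) hc₂)
  set r : ℝ := 2 ^ (-(i : ℤ))
  have hr : 0 < r := by positivity
  have h4r : (2 : ℝ) ^ (-(i : ℤ) + 2) = 4 * r := by
    rw [zpow_add₀ two_ne_zero, mul_comm]
    norm_num [r]
  have hν (y : Fin n → ℝ) :
      μH[d].restrict S (closedBall y (r / 2)) ≤ c₂ * ENNReal.ofReal r ^ d := by
    rw [Measure.restrict_apply measurableSet_closedBall]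
    exact measure_closedBall_half_inter_le
      (hupper r hr (zpow_le_one_of_nonpos₀ one_le_two (by simp))) y
  have hmain := ENNReal.rpow_one_div_le_of_mul_le hp (by positivity) ENNReal.ofReal_ne_top
    (lintegral_locApproxRn_rpow_le (k := k) (u := u) (zero_le_one.trans hu) hp f hr hν)
  rw [mul_div_assoc, ENNReal.mul_rpow_of_nonneg _ _ (by positivity),
    ENNReal.ofReal_two_zpow_neg_rpow_div_rpow, ENNReal.mul_rpow_of_nonneg _ _ (by positivity),
    ← ENNReal.rpow_mul, div_mul_div_cancel₀' hp.ne'] at hmain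
  rw [h4r]
  exact hmain.trans_eq (by ring)

/-- For a `d`-set `S ⊆ ℝⁿ` with `n-1 < d < n`, `k ∈ ℕ`, `1 ≤ u ≤ p < ∞` and
`f ∈ L¹_loc(ℝⁿ)`, for every `i ∈ ℕ`:
`‖E_k(f,Q(·,2^{-i}))_{L^u(ℝⁿ)}‖_{L^p(S,H^d)} ≤ c 2^{i(n-d)/p} ‖E_k(f,Q(·,2^{-i+2}))_{L^u(ℝⁿ)}‖_{L^p(ℝⁿ)}`. -/
theorem stmt_16 (n : ℕ) (d : ℝ) (hd1 : (n : ℝ) - 1 < d) (hdn : d < n)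
    (S : Set (Fin n → ℝ)) (hScl : IsClosed S)
    (c₁ c₂ : ℝ≥0∞) (hc₁ : 0 < c₁) (hc₂ : c₂ ≠ ∞)
    (hreg : ∀ w ∈ S, ∀ ρ : ℝ, 0 < ρ → ρ ≤ 1 →
      c₁ * ENNReal.ofReal ρ ^ d ≤ μH[d] (closedBall w ρ ∩ S) ∧
        μH[d] (closedBall w ρ ∩ S) ≤ c₂ * ENNReal.ofReal ρ ^ d)
    (k : ℕ) (u p : ℝ) (hu : 1 ≤ u) (hup : u ≤ p) :
    ∃ c : ℝ≥0∞, c ≠ ∞ ∧ ∀ f : (Fin n → ℝ) → ℝ, LocallyIntegrable f volume →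
      ∀ i : ℕ,
        (∫⁻ x in S, (locApproxRn n k u f x ((2 : ℝ) ^ (-(i : ℤ)))) ^ p ∂μH[d]) ^ (1 / p)
          ≤ c * ENNReal.ofReal ((2 : ℝ) ^ ((i : ℝ) * ((n : ℝ) - d) / p)) *
            (∫⁻ x, (locApproxRn n k u f x ((2 : ℝ) ^ (-(i : ℤ) + 2))) ^ p ∂volume) ^ (1 / p) :=
  stmt_16_general n d S c₁ c₂ hc₂ hreg k u p hu hup
end
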